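/- arXiv:1502.05942 — 2 statements merged into one kernel-verified Lean document; each statement's English description precedes it below -/
import Mathlib

section
/- Weak (1,1) bound for positive dyadic operators of complexity k: if S is a (1/2)-sparse collection of dyadic cubes, then the operator A_k f := ∑_{S ∈ S} ⟨|f|⟩_{S^{(k)}} 1_S satisfies ‖A_k f‖_{L^{1,∞}(μ)} ≤ C ‖f‖_{L¹(μ)} with C an absolute constant independent of k and μ, provided μ gives infinite measure to each d-dimensional quadrant. -/
open MeasureTheory Set ENNReal NNReal

noncomputable section

/-- A dyadic cube in `ℝ^d`: side length `2^n`, lower-left corner `m * 2^n`. -/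
structure DyadicCube (d : ℕ) where
  n : ℤ
  m : Fin d → ℤ

namespace DyadicCube

/-- The underlying set of a dyadic cube. -/
def toSet {d : ℕ} (Q : DyadicCube d) : Set (Fin d → ℝ) :=
  {x | ∀ i, (Q.m i : ℝ) * 2 ^ Q.n ≤ x i ∧ x i < ((Q.m i : ℝ) + 1) * 2 ^ Q.n}

/-- The dyadic parent of a dyadic cube. -/
def parent {d : ℕ} (Q : DyadicCube d) : DyadicCube d :=
  ⟨Q.n + 1, fun i => Int.fdiv (Q.m i) 2⟩

/-- The `k`-th dyadic ancestor of a dyadic cube. -/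
def ancestor {d : ℕ} (k : ℕ) (Q : DyadicCube d) : DyadicCube d :=
  parent^[k] Q

end DyadicCube

/-- `m` is a median of `f` on `Q` (w.r.t. `μ`). -/
def IsMedian {d : ℕ} (μ : Measure (Fin d → ℝ)) (f : (Fin d → ℝ) → ℝ)
    (Q : Set (Fin d → ℝ)) (m : ℝ) : Prop :=
  μ (Q ∩ {x | m < f x}) ≤ μ Q / 2 ∧ μ (Q ∩ {x | f x < m}) ≤ μ Q / 2

/-- The relative median oscillation `r_λ(f; Q)` of `f` about zero on `Q`. -/
def rOsc {d : ℕ} (μ : Measure (Fin d → ℝ)) (lam : ℝ) (f : (Fin d → ℝ) → ℝ)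
    (Q : Set (Fin d → ℝ)) : ℝ :=
  sInf {r : ℝ | 0 ≤ r ∧ μ (Q ∩ {x | r < |f x|}) ≤ ENNReal.ofReal lam * μ Q}

/-- The median oscillation `ω_λ(f; Q)`. -/
def mOsc {d : ℕ} (μ : Measure (Fin d → ℝ)) (lam : ℝ) (f : (Fin d → ℝ) → ℝ)
    (Q : Set (Fin d → ℝ)) : ℝ :=
  ⨅ c : ℝ, rOsc μ lam (fun x => f x - c) Q

/-- The average `⟨f⟩_Q = (1/μ(Q)) ∫_Q f dμ`. -/
def avg {d : ℕ} (μ : Measure (Fin d → ℝ)) (f : (Fin d → ℝ) → ℝ)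
    (Q : Set (Fin d → ℝ)) : ℝ :=
  (∫ x in Q, f x ∂μ) / (μ Q).toReal

/-- The `𝒮`-children of `F`: maximal members of `𝒮` strictly contained in `F`. -/
def sparseChildren {d : ℕ} (𝒮 : Set (DyadicCube d)) (F : DyadicCube d) :
    Set (DyadicCube d) :=
  {F' | F' ∈ 𝒮 ∧ F'.toSet ⊂ F.toSet ∧
    ∀ G ∈ 𝒮, G.toSet ⊂ F.toSet → F'.toSet ⊆ G.toSet → G = F'}

/-- The positive dyadic operator of complexity `k`, `A_k f = ∑_{S∈𝒮} ⟨|f|⟩_{S^{(k)}} 1_S`,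
ENNReal-valued. -/
def Aop {d : ℕ} (μ : Measure (Fin d → ℝ)) (𝒮 : Set (DyadicCube d)) (k : ℕ)
    (f : (Fin d → ℝ) → ℝ) (x : Fin d → ℝ) : ℝ≥0∞ :=
  ∑' S : 𝒮,
    ((∫⁻ y in (DyadicCube.ancestor k (S : DyadicCube d)).toSet, ‖f y‖₊ ∂μ) /
        μ (DyadicCube.ancestor k (S : DyadicCube d)).toSet) *
      (S : DyadicCube d).toSet.indicator (fun _ => (1 : ℝ≥0∞)) x

/-!
Write `ν = |f| μ` and `G(P) = ∑_{S ∈ 𝒮, S ⊇ P} ν(S^{(k)}) / μ(S^{(k)})`. Every point where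
`A_k f > τ` lies in a cube `P ∈ 𝒮` with `G(P) > τ`, so it suffices to bound `∑ μ(P)` over
disjoint such cubes. Since the thresholds `τ (3/4)^j / 4` sum to `τ`, each such `P` lies in some
`S ∈ 𝒮`, with `j` cubes of `𝒮` between them, such that `ν(S^{(k)}) > τ (3/4)^j μ(S^{(k)}) / 4`.
By sparseness, disjoint cubes lying `j` levels of `𝒮` below a cube fill at most `2^{-j}` of it.
Grouping the `P` with the same `j` under the maximal ancestors `S^{(k)}` bounds their total
measure by `4 (2/3)^j ν(ℝ^d) / τ`, and summing over `j` gives `12 ν(ℝ^d) / τ`.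
-/

lemma ENNReal.le_inv_mul_of_lt_div {s a b : ℝ≥0∞} (h : s < a / b) : b ≤ s⁻¹ * a := by
  have ha : a ≠ 0 := by rintro rfl; simp at h
  rcases eq_or_ne s 0 with rfl | hs
  · simp [ha]
  rw [← ENNReal.mul_le_iff_le_inv hs h.ne_top]
  exact ENNReal.mul_le_of_le_div h.le

lemma MeasureTheory.measure_biUnion_le_of_forall_finset {α ι : Type*} [MeasurableSpace α]
    [Countable ι] {μ : Measure α} {s : ι → Set α} {t : Set ι} {B : ℝ≥0∞}
    (h : ∀ F : Finset ι, ↑F ⊆ t → μ (⋃ i ∈ F, s i) ≤ B) : μ (⋃ i ∈ t, s i) ≤ B := by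
  classical
  have hdir : Directed (· ⊆ ·) fun F : Finset t => ⋃ i ∈ F, s i :=
    Monotone.directed_le fun F G hFG => biUnion_subset_biUnion_left hFG
  rw [biUnion_eq_iUnion, iUnion_eq_iUnion_finset, hdir.measure_iUnion]
  refine iSup_le fun F => ?_
  refine (measure_mono (subset_of_eq ?_)).trans (h (F.map (Function.Embedding.subtype _)) (by simp))
  ext
  simp

/-- Thresholds summing to `τ` but decaying more slowly than `2⁻¹ ^ j`. -/
def threshold (τ : ℝ≥0∞) (j : ℕ) : ℝ≥0∞ := ENNReal.ofReal ((3 / 4) ^ j / 4) * τ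

lemma tsum_threshold (τ : ℝ≥0∞) : ∑' j, threshold τ j = τ := by
  have hs : Summable fun j : ℕ => ((3 / 4 : ℝ) ^ j / 4) :=
    (summable_geometric_of_lt_one (by norm_num) (by norm_num)).div_const 4
  simp only [threshold]
  rw [ENNReal.tsum_mul_right, ← ENNReal.ofReal_tsum_of_nonneg (fun j => by positivity) hs,
    tsum_div_const, tsum_geometric_of_lt_one (by norm_num) (by norm_num)]
  norm_num

lemma tsum_inv_two_pow_mul_inv_threshold (τ : ℝ≥0∞) :
    ∑' j, (2⁻¹ : ℝ≥0∞) ^ j * (threshold τ j)⁻¹ = 12 * τ⁻¹ := by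
  have hterm : ∀ j : ℕ, (2⁻¹ : ℝ≥0∞) ^ j * (threshold τ j)⁻¹ =
      ENNReal.ofReal (4 * (2 / 3) ^ j) * τ⁻¹ := by
    intro j
    have ha : (0 : ℝ) < (3 / 4) ^ j / 4 := by positivity
    rw [threshold, ENNReal.mul_inv (Or.inl (by simp [ha])) (Or.inl ofReal_ne_top),
      ← ENNReal.ofReal_inv_of_pos ha, ← mul_assoc, ← ENNReal.ofReal_ofNat 2,
      ← ENNReal.ofReal_inv_of_pos (by norm_num), ← ENNReal.ofReal_pow (by norm_num),
      ← ENNReal.ofReal_mul (by positivity)]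
    congr 2
    field_simp
    rw [← mul_pow]
    norm_num
  have hs : Summable fun j : ℕ => (4 * (2 / 3 : ℝ) ^ j) :=
    (summable_geometric_of_lt_one (by norm_num) (by norm_num)).mul_left 4
  rw [tsum_congr hterm, ENNReal.tsum_mul_right,
    ← ENNReal.ofReal_tsum_of_nonneg (fun j => by positivity) hs, _root_.tsum_mul_left,
    tsum_geometric_of_lt_one (by norm_num) (by norm_num)]
  norm_num

namespace DyadicCube

variable {d : ℕ}

abbrev side (Q : DyadicCube d) (i : Fin d) : Set ℝ :=
  Ico ((Q.m i : ℝ) * 2 ^ Q.n) ((Q.m i + 1) * 2 ^ Q.n)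

lemma toSet_eq_pi (Q : DyadicCube d) : Q.toSet = univ.pi Q.side := by
  ext x
  simp [toSet]

lemma side_lt (Q : DyadicCube d) (i : Fin d) :
    (Q.m i : ℝ) * 2 ^ Q.n < (Q.m i + 1) * 2 ^ Q.n :=
  mul_lt_mul_of_pos_right (lt_add_one _) (by positivity)

lemma side_nonempty (Q : DyadicCube d) (i : Fin d) : (Q.side i).Nonempty :=
  nonempty_Ico.2 (Q.side_lt i)

lemma toSet_nonempty (Q : DyadicCube d) : Q.toSet.Nonempty := by
  rw [toSet_eq_pi]
  exact univ_pi_nonempty_iff.2 Q.side_nonempty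

lemma measurableSet_toSet (Q : DyadicCube d) : MeasurableSet Q.toSet := by
  rw [toSet_eq_pi]
  exact MeasurableSet.univ_pi fun _ => measurableSet_Ico

instance : Inhabited (DyadicCube d) := ⟨⟨0, 0⟩⟩

instance : Countable (DyadicCube d) :=
  Function.Injective.countable (f := fun Q : DyadicCube d => (Q.n, Q.m))
    fun ⟨_, _⟩ ⟨_, _⟩ h => by simpa using h

lemma Ico_subset_Ico_of_mem {n n' m m' : ℤ} (hn : n ≤ n') {x : ℝ}
    (hx : x ∈ Ico ((m : ℝ) * 2 ^ n) ((m + 1) * 2 ^ n))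
    (hx' : x ∈ Ico ((m' : ℝ) * 2 ^ n') ((m' + 1) * 2 ^ n')) :
    Ico ((m : ℝ) * 2 ^ n) ((m + 1) * 2 ^ n) ⊆ Ico ((m' : ℝ) * 2 ^ n') ((m' + 1) * 2 ^ n') := by
  -- With `n' = n + c`, the endpoints of the longer interval are integer multiples of `2 ^ n`.
  obtain ⟨c, rfl⟩ := Int.le.dest hn
  have hpow : (2 : ℝ) ^ (n + c : ℤ) = 2 ^ c * 2 ^ n := by
    rw [zpow_add₀ two_ne_zero, zpow_natCast, mul_comm]
  have h : (0 : ℝ) < 2 ^ n := by positivity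
  rw [hpow] at hx' ⊢
  have hlow : m' * 2 ^ c < m + 1 := by
    have : ((m' * 2 ^ c : ℤ) : ℝ) * 2 ^ n < ((m + 1 : ℤ) : ℝ) * 2 ^ n := by
      push_cast
      linarith [hx'.1, hx.2]
    exact_mod_cast lt_of_mul_lt_mul_right this h.le
  have hup : m < (m' + 1) * 2 ^ c := by
    have : ((m : ℤ) : ℝ) * 2 ^ n < (((m' + 1) * 2 ^ c : ℤ) : ℝ) * 2 ^ n := by
      push_cast
      linarith [hx.1, hx'.2]
    exact_mod_cast lt_of_mul_lt_mul_right this h.le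
  have hlow' : m' * 2 ^ c ≤ m := by omega
  have hup' : m + 1 ≤ (m' + 1) * 2 ^ c := by omega
  have hlowR : (m' : ℝ) * 2 ^ c ≤ m := by exact_mod_cast hlow'
  have hupR : (m : ℝ) + 1 ≤ (m' + 1) * 2 ^ c := by exact_mod_cast hup'
  apply Ico_subset_Ico <;> nlinarith

lemma toSet_subset_of_n_le {Q Q' : DyadicCube d} (h : (Q.toSet ∩ Q'.toSet).Nonempty)
    (hn : Q.n ≤ Q'.n) : Q.toSet ⊆ Q'.toSet := by
  obtain ⟨x, hx, hx'⟩ := h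
  simp only [toSet_eq_pi] at hx hx' ⊢
  exact pi_mono fun i _ => Ico_subset_Ico_of_mem hn (hx i trivial) (hx' i trivial)

lemma side_subset_side {Q Q' : DyadicCube d} (h : Q.toSet ⊆ Q'.toSet) (i : Fin d) :
    Q.side i ⊆ Q'.side i := by
  rw [toSet_eq_pi, toSet_eq_pi, pi_subset_pi_iff] at h
  exact h.elim (· i trivial) fun h' => absurd h' (toSet_eq_pi Q ▸ Q.toSet_nonempty).ne_empty

lemma n_le_of_toSet_subset (hd : 0 < d) {Q Q' : DyadicCube d} (h : Q.toSet ⊆ Q'.toSet) :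
    Q.n ≤ Q'.n := by
  have := (Ico_subset_Ico_iff (Q.side_lt ⟨0, hd⟩)).1 (side_subset_side h ⟨0, hd⟩)
  exact (zpow_le_zpow_iff_right₀ (by norm_num : (1 : ℝ) < 2)).1 (by nlinarith [this.1, this.2])

lemma eq_of_toSet_subset_of_n_eq {Q Q' : DyadicCube d} (h : Q.toSet ⊆ Q'.toSet)
    (hn : Q.n = Q'.n) : Q = Q' := by
  obtain ⟨n, m⟩ := Q
  obtain ⟨n', m'⟩ := Q'
  obtain rfl : n = n' := hn
  congr
  funext i
  have hi := (Ico_subset_Ico_iff (side_lt ⟨n, m⟩ i)).1 (side_subset_side h i)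
  have h2 : (0 : ℝ) < 2 ^ n := by positivity
  have : (m' i : ℝ) = m i := by nlinarith [hi.1, hi.2]
  exact_mod_cast this.symm

lemma toSet_injective (hd : 0 < d) : Function.Injective (toSet : DyadicCube d → _) :=
  fun _ _ h => eq_of_toSet_subset_of_n_eq h.subset
    (le_antisymm (n_le_of_toSet_subset hd h.subset) (n_le_of_toSet_subset hd h.symm.subset))

lemma toSet_subset_parent (Q : DyadicCube d) : Q.toSet ⊆ Q.parent.toSet := by
  rw [toSet_eq_pi, toSet_eq_pi]
  refine pi_mono fun i _ => ?_
  have hq : (Q.m i).fdiv 2 = Q.m i / 2 := by simp [Int.fdiv_eq_ediv]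
  have hlow : (((Q.m i).fdiv 2 * 2 : ℤ) : ℝ) ≤ Q.m i := by exact_mod_cast (by omega)
  have hup : ((Q.m i + 1 : ℤ) : ℝ) ≤ (((Q.m i).fdiv 2 + 1) * 2 : ℤ) := by exact_mod_cast (by omega)
  have h : (0 : ℝ) < 2 ^ Q.n := by positivity
  push_cast at hlow hup
  simp only [side, parent, zpow_add_one₀ (two_ne_zero' ℝ)]
  apply Ico_subset_Ico <;> nlinarith

lemma toSet_subset_ancestor (k : ℕ) (Q : DyadicCube d) : Q.toSet ⊆ (ancestor k Q).toSet := by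
  induction k with
  | zero => exact subset_rfl
  | succ k ih =>
    rw [ancestor, Function.iterate_succ_apply']
    exact ih.trans (toSet_subset_parent _)

lemma eq_of_n_eq {Q Q' : DyadicCube d} (h : (Q.toSet ∩ Q'.toSet).Nonempty) (hn : Q.n = Q'.n) :
    Q = Q' :=
  eq_of_toSet_subset_of_n_eq (toSet_subset_of_n_le h hn.le) hn

lemma toSet_subset_or_subset {Q Q' : DyadicCube d} (h : (Q.toSet ∩ Q'.toSet).Nonempty) :
    Q.toSet ⊆ Q'.toSet ∨ Q'.toSet ⊆ Q.toSet :=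
  (le_total Q.n Q'.n).imp (toSet_subset_of_n_le h) (toSet_subset_of_n_le (inter_comm _ _ ▸ h))

lemma toSet_ssubset_of_subset_of_ne (hd : 0 < d) {Q Q' : DyadicCube d}
    (h : Q.toSet ⊆ Q'.toSet) (hne : Q ≠ Q') : Q.toSet ⊂ Q'.toSet :=
  h.ssubset_of_ne fun e => hne (toSet_injective hd e)

lemma finite_setOf_subset_subset (hd : 0 < d) (A B : DyadicCube d) :
    {G : DyadicCube d | A.toSet ⊆ G.toSet ∧ G.toSet ⊆ B.toSet}.Finite := by
  refine Finite.of_finite_image (f := n) ((finite_Icc A.n B.n).subset ?_)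
    fun G hG G' hG' hn => ?_
  · rintro _ ⟨G, hG, rfl⟩
    exact ⟨n_le_of_toSet_subset hd hG.1, n_le_of_toSet_subset hd hG.2⟩
  · obtain ⟨x, hx⟩ := A.toSet_nonempty
    exact eq_of_n_eq ⟨x, hG.1 hx, hG'.1 hx⟩ hn

/-- Take the maximal members. -/
lemma exists_pairwiseDisjoint_subfamily_covering (hd : 0 < d) (F : Finset (DyadicCube d)) :
    ∃ M ⊆ F, (M : Set (DyadicCube d)).PairwiseDisjoint toSet ∧
      ∀ Q ∈ F, ∃ R ∈ M, Q.toSet ⊆ R.toSet := by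
  classical
  refine ⟨F.filter (MaximalFor (· ∈ F) toSet), Finset.filter_subset _ _, ?_, ?_⟩
  · intro R hR R' hR' hne
    simp only [Finset.coe_filter] at hR hR'
    refine not_not.1 fun hint => hne ?_
    rcases toSet_subset_or_subset (not_disjoint_iff_nonempty_inter.1 hint) with h | h
    · exact toSet_injective hd (h.antisymm (hR.2.2 hR'.1 h))
    · exact toSet_injective hd ((hR'.2.2 hR.1 h).antisymm h)
  · intro Q hQ
    obtain ⟨R, hR, hmax⟩ := (F.filter (Q.toSet ⊆ ·.toSet)).exists_maximalFor toSet
      ⟨Q, Finset.mem_filter.2 ⟨hQ, subset_rfl⟩⟩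
    rw [Finset.mem_filter] at hR
    refine ⟨R, Finset.mem_filter.2 ⟨hR.1, hR.1, fun R' hR' hRR' => ?_⟩, hR.2⟩
    exact hmax (Finset.mem_filter.2 ⟨hR', hR.2.trans hRR'⟩) hRR'

open Classical in
/-- Group the terms under the maximal cubes among the `q i`, which are disjoint. -/
lemma sum_le_mul_measure_of_forall_sum_le (hd : 0 < d) {ι : Type*} (F : Finset ι)
    (a : ι → ℝ≥0∞) (q : ι → DyadicCube d) (c : ℝ≥0∞) (ν : Measure (Fin d → ℝ))
    {E : Set (Fin d → ℝ)} (hqE : ∀ i ∈ F, (q i).toSet ⊆ E)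
    (h : ∀ i ∈ F, ∑ j ∈ F with (q j).toSet ⊆ (q i).toSet, a j ≤ c * ν (q i).toSet) :
    ∑ i ∈ F, a i ≤ c * ν E := by
  obtain ⟨M, hMF, hMdisj, hcov⟩ := exists_pairwiseDisjoint_subfamily_covering hd (F.image q)
  have hcov' : ∀ i ∈ F, ∃ R ∈ M, (q i).toSet ⊆ R.toSet :=
    fun i hi => hcov (q i) (Finset.mem_image_of_mem q hi)
  choose! r hrM hqr using hcov'
  have hMq : ∀ R ∈ M, ∃ i ∈ F, q i = R := fun R hR => Finset.mem_image.1 (hMF hR)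
  calc ∑ i ∈ F, a i = ∑ R ∈ M, ∑ i ∈ F with r i = R, a i :=
        (Finset.sum_fiberwise_of_maps_to hrM a).symm
    _ ≤ ∑ R ∈ M, ∑ i ∈ F with (q i).toSet ⊆ R.toSet, a i := by
        refine Finset.sum_le_sum fun R _ => Finset.sum_le_sum_of_subset fun i hi => ?_
        rw [Finset.mem_filter] at hi ⊢
        exact ⟨hi.1, hi.2 ▸ hqr i hi.1⟩
    _ ≤ ∑ R ∈ M, c * ν R.toSet := by
        gcongr with R hR
        obtain ⟨i, hi, rfl⟩ := hMq R hR
        exact h i hi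
    _ = c * ν (⋃ R ∈ M, R.toSet) := by
        rw [← Finset.mul_sum, measure_biUnion_finset hMdisj fun R _ => measurableSet_toSet R]
    _ ≤ c * ν E := by
        gcongr
        refine iUnion₂_subset fun R hR => ?_
        obtain ⟨i, hi, rfl⟩ := hMq R hR
        exact hqE i hi

section Sparse

variable {μ : Measure (Fin d → ℝ)} {𝒮 : Set (DyadicCube d)}

def IsSparse (μ : Measure (Fin d → ℝ)) (𝒮 : Set (DyadicCube d)) : Prop :=
  ∀ S ∈ 𝒮, ∑' S' : sparseChildren 𝒮 S, μ (S' : DyadicCube d).toSet ≤ μ S.toSet / 2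

lemma IsSparse.sum_le_half (hsp : IsSparse μ 𝒮) {T : DyadicCube d} (hT : T ∈ 𝒮)
    {s : Finset (DyadicCube d)} (hs : ∀ C ∈ s, C ∈ sparseChildren 𝒮 T) :
    ∑ C ∈ s, μ C.toSet ≤ μ T.toSet / 2 := by
  calc ∑ C ∈ s, μ C.toSet = ∑ C ∈ s, (sparseChildren 𝒮 T).indicator (μ ∘ toSet) C :=
        Finset.sum_congr rfl fun C hC => (indicator_of_mem (hs C hC) (μ ∘ toSet)).symm
    _ ≤ ∑' C, (sparseChildren 𝒮 T).indicator (μ ∘ toSet) C := ENNReal.sum_le_tsum s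
    _ ≤ μ T.toSet / 2 := (tsum_subtype _ (μ ∘ toSet)).symm.trans_le (hsp T hT)

def depthSet (𝒮 : Set (DyadicCube d)) (P T : DyadicCube d) : Set (DyadicCube d) :=
  {G | G ∈ 𝒮 ∧ P.toSet ⊆ G.toSet ∧ G.toSet ⊂ T.toSet}

def depth (𝒮 : Set (DyadicCube d)) (P T : DyadicCube d) : ℕ := (depthSet 𝒮 P T).ncard

lemma depthSet_finite (hd : 0 < d) (P T : DyadicCube d) : (depthSet 𝒮 P T).Finite :=
  (finite_setOf_subset_subset hd P T).subset fun _ hG => ⟨hG.2.1, hG.2.2.subset⟩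

lemma depthSet_mono (P : DyadicCube d) {T T' : DyadicCube d} (h : T.toSet ⊆ T'.toSet) :
    depthSet 𝒮 P T ⊆ depthSet 𝒮 P T' :=
  fun _ hG => ⟨hG.1, hG.2.1, hG.2.2.trans_subset h⟩

lemma depth_mono (hd : 0 < d) (P : DyadicCube d) {T T' : DyadicCube d}
    (h : T.toSet ⊆ T'.toSet) : depth 𝒮 P T ≤ depth 𝒮 P T' :=
  ncard_le_ncard (depthSet_mono P h) (depthSet_finite hd P T')

lemma depth_lt_depth (hd : 0 < d) {P T T' : DyadicCube d} (hT : T ∈ 𝒮)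
    (hPT : P.toSet ⊆ T.toSet) (h : T.toSet ⊂ T'.toSet) : depth 𝒮 P T < depth 𝒮 P T' := by
  refine ncard_lt_ncard ?_ (depthSet_finite hd P T')
  refine (ssubset_iff_of_subset (depthSet_mono P h.subset)).2
    ⟨T, ⟨hT, hPT, h⟩, fun hT' => hT'.2.2.ne rfl⟩

lemma depth_injOn (hd : 0 < d) (P : DyadicCube d) :
    InjOn (depth 𝒮 P) {S | S ∈ 𝒮 ∧ P.toSet ⊆ S.toSet} := by
  intro S hS S' hS' h
  by_contra hne
  obtain ⟨x, hx⟩ := P.toSet_nonempty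
  rcases toSet_subset_or_subset ⟨x, hS.2 hx, hS'.2 hx⟩ with hSS' | hS'S
  · exact (depth_lt_depth hd hS.1 hS.2 (toSet_ssubset_of_subset_of_ne hd hSS' hne)).ne h
  · exact (depth_lt_depth hd hS'.1 hS'.2
      (toSet_ssubset_of_subset_of_ne hd hS'S (Ne.symm hne))).ne h.symm

/-- The largest cube of `depthSet 𝒮 P T` will do. -/
lemma exists_sparseChild_depth_add_one (hd : 0 < d) {P T : DyadicCube d}
    (h : 0 < depth 𝒮 P T) :
    ∃ G ∈ sparseChildren 𝒮 T, P.toSet ⊆ G.toSet ∧ depth 𝒮 P G + 1 = depth 𝒮 P T := by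
  obtain ⟨G, hG, hmax⟩ := (depthSet_finite hd P T).exists_maximalFor toSet _
    (nonempty_of_ncard_ne_zero h.ne')
  have hmax' : ∀ G' ∈ depthSet 𝒮 P T, G.toSet ⊆ G'.toSet → G' = G :=
    fun G' hG' hGG' => toSet_injective hd ((hmax hG' hGG').antisymm hGG')
  have hinsert : depthSet 𝒮 P T = insert G (depthSet 𝒮 P G) := by
    refine Subset.antisymm (fun G' hG' => ?_) (insert_subset hG (depthSet_mono P hG.2.2.subset))
    obtain ⟨x, hx⟩ := P.toSet_nonempty
    rcases toSet_subset_or_subset ⟨x, hG'.2.1 hx, hG.2.1 hx⟩ with hG'G | hGG'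
    · rcases eq_or_ne G' G with rfl | hne
      · exact mem_insert _ _
      · exact mem_insert_of_mem _ ⟨hG'.1, hG'.2.1, toSet_ssubset_of_subset_of_ne hd hG'G hne⟩
    · exact hmax' G' hG' hGG' ▸ mem_insert _ _
  refine ⟨G, ⟨hG.1, hG.2.2, fun G' hG' hG'T hGG' => hmax' G' ⟨hG', ?_, hG'T⟩ hGG'⟩, hG.2.1, ?_⟩
  · exact hG.2.1.trans hGG'
  · rw [depth, depth, hinsert, ncard_insert_of_notMem (fun h => h.2.2.ne rfl)
      (depthSet_finite hd P G)]

/-- Each step down in depth passes to sparse children, which carry at most half the measure. -/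
lemma IsSparse.sum_measure_le_of_le_depth (hd : 0 < d) (hsp : IsSparse μ 𝒮) (i : ℕ)
    {T : DyadicCube d} (hT : T ∈ 𝒮) {F : Finset (DyadicCube d)}
    (hF : (F : Set (DyadicCube d)).PairwiseDisjoint toSet)
    (hFT : ∀ P ∈ F, P.toSet ⊆ T.toSet ∧ i ≤ depth 𝒮 P T) :
    ∑ P ∈ F, μ P.toSet ≤ 2⁻¹ ^ i * μ T.toSet := by
  classical
  induction i generalizing T F with
  | zero =>
    rw [pow_zero, one_mul, ← measure_biUnion_finset hF fun P _ => measurableSet_toSet P]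
    exact measure_mono (iUnion₂_subset fun P hP => (hFT P hP).1)
  | succ i ih =>
    have hchild : ∀ P ∈ F, ∃ G ∈ sparseChildren 𝒮 T, P.toSet ⊆ G.toSet ∧
        depth 𝒮 P G + 1 = depth 𝒮 P T :=
      fun P hP => exists_sparseChild_depth_add_one hd (by have := (hFT P hP).2; omega)
    choose! G hGT hPG hdepth using hchild
    calc ∑ P ∈ F, μ P.toSet = ∑ C ∈ F.image G, ∑ P ∈ F with G P = C, μ P.toSet :=
          (Finset.sum_fiberwise_of_maps_to (fun P hP => Finset.mem_image_of_mem G hP) _).symm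
      _ ≤ ∑ C ∈ F.image G, 2⁻¹ ^ i * μ C.toSet := by
          refine Finset.sum_le_sum fun C hC => ?_
          obtain ⟨P₀, hP₀, rfl⟩ := Finset.mem_image.1 hC
          refine ih (hGT P₀ hP₀).1 (hF.subset (Finset.filter_subset _ _)) fun P hP => ?_
          obtain ⟨hP, hGP⟩ := Finset.mem_filter.1 hP
          have := (hFT P hP).2
          exact ⟨hGP ▸ hPG P hP, by have := hdepth P hP; rw [← hGP]; omega⟩
      _ ≤ 2⁻¹ ^ i * (μ T.toSet / 2) := by
          rw [← Finset.mul_sum]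
          gcongr
          refine hsp.sum_le_half hT fun C hC => ?_
          obtain ⟨P, hP, rfl⟩ := Finset.mem_image.1 hC
          exact hGT P hP
      _ = 2⁻¹ ^ (i + 1) * μ T.toSet := by
          rw [pow_succ, mul_assoc, ENNReal.div_eq_inv_mul]

/-- Apply the previous lemma below each maximal cube among the witnesses `S`. -/
lemma IsSparse.sum_measure_le_of_exists_le_depth (hd : 0 < d) (hsp : IsSparse μ 𝒮) (i : ℕ)
    {E : Set (Fin d → ℝ)} {F : Finset (DyadicCube d)}
    (hF : (F : Set (DyadicCube d)).PairwiseDisjoint toSet)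
    (hFE : ∀ P ∈ F, ∃ S ∈ 𝒮, P.toSet ⊆ S.toSet ∧ S.toSet ⊆ E ∧ i ≤ depth 𝒮 P S) :
    ∑ P ∈ F, μ P.toSet ≤ 2⁻¹ ^ i * μ E := by
  classical
  choose! S hS𝒮 hPS hSE hdepth using hFE
  refine sum_le_mul_measure_of_forall_sum_le hd F _ S _ μ hSE fun P hP => ?_
  refine hsp.sum_measure_le_of_le_depth hd i (hS𝒮 P hP) (hF.subset (Finset.filter_subset _ _))
    fun P' hP' => ?_
  obtain ⟨hP', hSS⟩ := Finset.mem_filter.1 hP'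
  exact ⟨(hPS P' hP').trans hSS, (hdepth P' hP').trans (depth_mono hd P' hSS)⟩

/-- For `ν = |f| μ` this is `⟨|f|⟩_{S^{(k)}}`. -/
def ancestorAverage (μ ν : Measure (Fin d → ℝ)) (k : ℕ) (S : DyadicCube d) : ℝ≥0∞ :=
  ν (ancestor k S).toSet / μ (ancestor k S).toSet

def above (𝒮 : Set (DyadicCube d)) (A : Set (Fin d → ℝ)) : Set (DyadicCube d) :=
  {S | S ∈ 𝒮 ∧ A ⊆ S.toSet}

def sumAbove (𝒮 : Set (DyadicCube d)) (w : DyadicCube d → ℝ≥0∞)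
    (A : Set (Fin d → ℝ)) : ℝ≥0∞ :=
  ∑' S : above 𝒮 A, w S

lemma Aop_eq_sumAbove (μ : Measure (Fin d → ℝ)) (𝒮 : Set (DyadicCube d)) (k : ℕ)
    (f : (Fin d → ℝ) → ℝ) (x : Fin d → ℝ) :
    Aop μ 𝒮 k f x =
      sumAbove 𝒮 (ancestorAverage μ (μ.withDensity fun y => ‖f y‖₊) k) {x} := by
  set w := ancestorAverage μ (μ.withDensity fun y => ‖f y‖₊) k
  calc Aop μ 𝒮 k f x = ∑' S : 𝒮, w S * (S : DyadicCube d).toSet.indicator 1 x := by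
        simp only [Aop, w, ancestorAverage, withDensity_apply _ (measurableSet_toSet _)]
        rfl
    _ = ∑' S, 𝒮.indicator (fun S => w S * S.toSet.indicator 1 x) S :=
        tsum_subtype 𝒮 fun S => w S * S.toSet.indicator 1 x
    _ = ∑' S, (above 𝒮 {x}).indicator w S := by
        congr 1
        ext S
        by_cases hS : S ∈ 𝒮 <;> by_cases hx : x ∈ S.toSet <;> simp [above, hS, hx]
    _ = sumAbove 𝒮 w {x} := (tsum_subtype _ _).symm

/-- Take for `P` the smallest cube containing `x` in a finite partial sum exceeding `τ`. -/
lemma exists_lt_sumAbove_of_lt_sumAbove_singleton {w : DyadicCube d → ℝ≥0∞} {τ : ℝ≥0∞}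
    {x : Fin d → ℝ} (h : τ < sumAbove 𝒮 w {x}) :
    ∃ P ∈ 𝒮, x ∈ P.toSet ∧ τ < sumAbove 𝒮 w P.toSet := by
  classical
  rw [sumAbove, tsum_subtype, ENNReal.tsum_eq_iSup_sum] at h
  obtain ⟨F, hF⟩ := lt_iSup_iff.1 h
  obtain ⟨S₀, hS₀F, hS₀⟩ := Finset.exists_ne_zero_of_sum_ne_zero (pos_of_gt hF).ne'
  obtain ⟨P, hP, hmin⟩ := (F.filter (· ∈ above 𝒮 {x})).exists_min_image n
    ⟨S₀, Finset.mem_filter.2 ⟨hS₀F, mem_of_indicator_ne_zero hS₀⟩⟩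
  obtain ⟨hPF, hP𝒮, hxP⟩ := Finset.mem_filter.1 hP
  refine ⟨P, hP𝒮, singleton_subset_iff.1 hxP, hF.trans_le ?_⟩
  rw [sumAbove, tsum_subtype]
  refine (Finset.sum_le_sum fun S hS => ?_).trans (ENNReal.sum_le_tsum F)
  by_cases hSx : S ∈ above 𝒮 {x}
  · have hPS : P.toSet ⊆ S.toSet := toSet_subset_of_n_le
      ⟨x, singleton_subset_iff.1 hxP, singleton_subset_iff.1 hSx.2⟩
      (hmin S (Finset.mem_filter.2 ⟨hS, hSx⟩))
    rw [indicator_of_mem hSx, indicator_of_mem (show S ∈ above 𝒮 P.toSet from ⟨hSx.1, hPS⟩)]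
  · rw [indicator_of_notMem hSx]
    exact zero_le

/-- Distinct cubes above `P` have distinct depths and the thresholds sum to `τ`, so one of them
beats the threshold attached to its depth. -/
lemma exists_threshold_lt_of_lt_sumAbove (hd : 0 < d) {w : DyadicCube d → ℝ≥0∞} {τ : ℝ≥0∞}
    {P : DyadicCube d} (h : τ < sumAbove 𝒮 w P.toSet) :
    ∃ S ∈ 𝒮, P.toSet ⊆ S.toSet ∧ threshold τ (depth 𝒮 P S) < w S := by
  by_contra! H
  refine h.not_ge ?_
  calc sumAbove 𝒮 w P.toSet ≤ ∑' S : above 𝒮 P.toSet, threshold τ (depth 𝒮 P S) :=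
        ENNReal.tsum_le_tsum fun S => H S S.2.1 S.2.2
    _ ≤ ∑' j, threshold τ j :=
        ENNReal.tsum_comp_le_tsum_of_injective (depth_injOn hd P).injective _
    _ = τ := tsum_threshold τ

/-- Group the `P` by the depth `j` of the cube `S ⊇ P` beating its threshold, then under the
maximal ancestors `S^{(k)}`, whose `μ`-measure is at most `(threshold τ j)⁻¹` times their
`ν`-measure. -/
theorem IsSparse.sum_measure_le (hd : 0 < d) (hsp : IsSparse μ 𝒮) (ν : Measure (Fin d → ℝ))
    (k : ℕ) (τ : ℝ≥0∞) {F : Finset (DyadicCube d)}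
    (hF : (F : Set (DyadicCube d)).PairwiseDisjoint toSet)
    (hFτ : ∀ P ∈ F, P ∈ 𝒮 ∧ τ < sumAbove 𝒮 (ancestorAverage μ ν k) P.toSet) :
    ∑ P ∈ F, μ P.toSet ≤ 12 * τ⁻¹ * ν univ := by
  classical
  choose! S hS𝒮 hPS hS using fun P hP => exists_threshold_lt_of_lt_sumAbove hd (hFτ P hP).2
  set i := fun P => depth 𝒮 P (S P)
  have hfiber : ∀ j, ∑ P ∈ F with i P = j, μ P.toSet ≤ 2⁻¹ ^ j * (threshold τ j)⁻¹ * ν univ := by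
    intro j
    refine sum_le_mul_measure_of_forall_sum_le hd _ _ (fun P => ancestor k (S P)) _ ν
      (fun _ _ => subset_univ _) fun P hP => ?_
    obtain ⟨hPF, rfl⟩ := Finset.mem_filter.1 hP
    refine (hsp.sum_measure_le_of_exists_le_depth hd (i P) (E := (ancestor k (S P)).toSet)
      (hF.subset fun P' hP' => (Finset.mem_filter.1 (Finset.mem_filter.1 hP').1).1)
      fun P' hP' => ?_).trans ?_
    · obtain ⟨hP', hsub⟩ := Finset.mem_filter.1 hP'
      obtain ⟨hP'F, hi⟩ := Finset.mem_filter.1 hP'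
      exact ⟨S P', hS𝒮 P' hP'F, hPS P' hP'F, (toSet_subset_ancestor k _).trans hsub, hi.ge⟩
    · rw [mul_assoc]
      gcongr
      exact ENNReal.le_inv_mul_of_lt_div (hS P hPF)
  calc ∑ P ∈ F, μ P.toSet = ∑ j ∈ F.image i, ∑ P ∈ F with i P = j, μ P.toSet :=
        (Finset.sum_fiberwise_of_maps_to (fun P hP => Finset.mem_image_of_mem i hP) _).symm
    _ ≤ ∑ j ∈ F.image i, 2⁻¹ ^ j * (threshold τ j)⁻¹ * ν univ :=
        Finset.sum_le_sum fun j _ => hfiber j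
    _ ≤ ∑' j, 2⁻¹ ^ j * (threshold τ j)⁻¹ * ν univ := ENNReal.sum_le_tsum _
    _ = 12 * τ⁻¹ * ν univ := by
        rw [ENNReal.tsum_mul_right, tsum_inv_two_pow_mul_inv_threshold]

theorem IsSparse.measure_lt_sumAbove_le (hd : 0 < d) (hsp : IsSparse μ 𝒮)
    (ν : Measure (Fin d → ℝ)) (k : ℕ) (τ : ℝ≥0∞) :
    μ {x | τ < sumAbove 𝒮 (ancestorAverage μ ν k) {x}} ≤ 12 * τ⁻¹ * ν univ := by
  set 𝒬 := {P | P ∈ 𝒮 ∧ τ < sumAbove 𝒮 (ancestorAverage μ ν k) P.toSet}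
  calc μ {x | τ < sumAbove 𝒮 (ancestorAverage μ ν k) {x}} ≤ μ (⋃ P ∈ 𝒬, P.toSet) := by
        refine measure_mono fun x hx => ?_
        obtain ⟨P, hP𝒮, hxP, hP⟩ := exists_lt_sumAbove_of_lt_sumAbove_singleton hx
        exact mem_biUnion (show P ∈ 𝒬 from ⟨hP𝒮, hP⟩) hxP
    _ ≤ 12 * τ⁻¹ * ν univ := measure_biUnion_le_of_forall_finset fun F hF => ?_
  obtain ⟨M, hMF, hMdisj, hcov⟩ := exists_pairwiseDisjoint_subfamily_covering hd F
  calc μ (⋃ P ∈ F, P.toSet) ≤ μ (⋃ R ∈ M, R.toSet) := by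
        refine measure_mono (iUnion₂_subset fun P hP => ?_)
        obtain ⟨R, hR, hPR⟩ := hcov P hP
        exact hPR.trans (subset_biUnion_of_mem (u := fun R => R.toSet) hR)
    _ = ∑ R ∈ M, μ R.toSet := measure_biUnion_finset hMdisj fun R _ => measurableSet_toSet R
    _ ≤ 12 * τ⁻¹ * ν univ := hsp.sum_measure_le hd ν k τ hMdisj fun R hR => hF (hMF hR)

end Sparse

end DyadicCube

/-- weak (1,1) bound for positive dyadic operators of complexity `k`,
with constant independent of `k` and `μ`. -/
theorem weak_one_one_positive_dyadic :
    ∃ C : ℝ≥0∞, C ≠ ⊤ ∧ 0 < C ∧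
      ∀ (d : ℕ) (k : ℕ) (μ : Measure (Fin d → ℝ)), IsLocallyFiniteMeasure μ →
        (∀ s : Fin d → Bool,
          μ {x : Fin d → ℝ | ∀ i, if s i then 0 ≤ x i else x i < 0} = ⊤) →
      ∀ (𝒮 : Set (DyadicCube d)),
        (∀ S ∈ 𝒮, ∑' S' : sparseChildren 𝒮 S, μ (S' : DyadicCube d).toSet ≤
          μ S.toSet / 2) →
      ∀ (f : (Fin d → ℝ) → ℝ), Integrable f μ →
      ∀ t : ℝ, 0 < t →
        ENNReal.ofReal t * μ {x | ENNReal.ofReal t < Aop μ 𝒮 k f x} ≤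
          C * ∫⁻ y, ‖f y‖₊ ∂μ := by
  refine ⟨12, by norm_num, by norm_num, fun d k μ hμ hquad 𝒮 hsp f _ t ht => ?_⟩
  obtain rfl | hd := Nat.eq_zero_or_pos d
  -- `Fin 0 → ℝ` is a point: its only quadrant is the whole space, which has finite measure.
  · have := hμ
    exact absurd (by simpa using hquad finZeroElim) (measure_ne_top μ univ)
  set τ := ENNReal.ofReal t
  set ν := μ.withDensity fun y => (‖f y‖₊ : ℝ≥0∞)
  have hτ : τ ≠ 0 := (ENNReal.ofReal_pos.2 ht).ne'
  calc τ * μ {x | τ < Aop μ 𝒮 k f x}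
      = τ * μ {x | τ < DyadicCube.sumAbove 𝒮 (DyadicCube.ancestorAverage μ ν k) {x}} := by
        simp_rw [DyadicCube.Aop_eq_sumAbove, ν]
    _ ≤ τ * (12 * τ⁻¹ * ν univ) := by
        gcongr
        exact DyadicCube.IsSparse.measure_lt_sumAbove_le hd hsp ν k τ
    _ = 12 * (τ * τ⁻¹) * ν univ := by ring
    _ = 12 * ∫⁻ y, ‖f y‖₊ ∂μ := by
        rw [ENNReal.mul_inv_cancel hτ ofReal_ne_top, mul_one,
          withDensity_apply _ MeasurableSet.univ, Measure.restrict_univ]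
end
end

section
/- Equivalence of oscillation quantities: for any dyadic cube F with 0 < μ(F) < ∞ and any 0 < λ < 1/2, ω_λ(f;F) + |m(f,F) − m(f,F̂)| ≍ r_λ(f − m(f;F̂); F), with implicit constants absolute. -/
open MeasureTheory Set ENNReal NNReal

noncomputable section

/-
A median `m` of `f` on `Q` is within `r` of every constant `c` such that `|f - c| ≤ r` on all but
a `λ`-fraction of `Q`: since `λ < 1/2`, that set carries more than half of `Q`, so it cannot lie
entirely above or below `m`. Hence `|m(f,F) - c| ≤ r_λ(f - c; F)` for all `c`. Combined with the
triangle inequality `r_λ(f - c'; F) ≤ r_λ(f - c; F) + |c - c'|`, this gives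
`r_λ(f - m(f,F̂); F) ≤ 2 ω_λ(f; F) + |m(f,F) - m(f,F̂)|`, while trivially both `ω_λ(f; F)` and
`|m(f,F) - m(f,F̂)|` are at most `r_λ(f - m(f,F̂); F)`. The constants are `1/2` and `2`.
-/

open Filter

lemma DyadicCube.measurableSet_toSet_s18 {d : ℕ} (Q : DyadicCube d) : MeasurableSet Q.toSet := by
  have h : Q.toSet = ⋂ i, {x : Fin d → ℝ |
      (Q.m i : ℝ) * 2 ^ Q.n ≤ x i ∧ x i < ((Q.m i : ℝ) + 1) * 2 ^ Q.n} := by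
    ext x; simp [DyadicCube.toSet]
  rw [h]
  exact MeasurableSet.iInter fun i =>
    (measurableSet_le measurable_const (measurable_pi_apply i)).inter
      (measurableSet_lt (measurable_pi_apply i) measurable_const)

lemma ENNReal.ofReal_mul_lt_div_two {lam : ℝ} {a : ℝ≥0∞} (hlam : lam < 1 / 2) (ha₀ : a ≠ 0)
    (ha : a ≠ ⊤) : ENNReal.ofReal lam * a < a / 2 := by
  have h : ENNReal.ofReal lam < 2⁻¹ := by
    rw [← ENNReal.ofReal_toReal (a := 2⁻¹) (by norm_num)]
    exact ENNReal.ofReal_lt_ofReal_iff'.mpr ⟨by simpa using hlam, by norm_num⟩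
  rw [ENNReal.div_eq_inv_mul]
  exact ENNReal.mul_lt_mul_left ha₀ ha h

section Oscillation

variable {d : ℕ} {μ : Measure (Fin d → ℝ)} {lam : ℝ} {Q : Set (Fin d → ℝ)}

def rOscSet (μ : Measure (Fin d → ℝ)) (lam : ℝ) (g : (Fin d → ℝ) → ℝ) (Q : Set (Fin d → ℝ)) :
    Set ℝ :=
  {r : ℝ | 0 ≤ r ∧ μ (Q ∩ {x | r < |g x|}) ≤ ENNReal.ofReal lam * μ Q}

lemma rOsc_eq_sInf (g : (Fin d → ℝ) → ℝ) : rOsc μ lam g Q = sInf (rOscSet μ lam g Q) := rfl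

lemma rOscSet_bddBelow (g : (Fin d → ℝ) → ℝ) : BddBelow (rOscSet μ lam g Q) :=
  ⟨0, fun _ hr => hr.1⟩

lemma rOsc_nonneg (g : (Fin d → ℝ) → ℝ) : 0 ≤ rOsc μ lam g Q :=
  Real.sInf_nonneg fun _ hr => hr.1

lemma mOsc_le_rOsc (f : (Fin d → ℝ) → ℝ) (c : ℝ) :
    mOsc μ lam f Q ≤ rOsc μ lam (fun x => f x - c) Q :=
  ciInf_le ⟨0, by rintro _ ⟨c, rfl⟩; exact rOsc_nonneg _⟩ c

/-- Needed wherever `rOsc` is bounded from below, since `sInf ∅ = 0` in `ℝ`. -/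
lemma rOscSet_nonempty {g : (Fin d → ℝ) → ℝ} (hQ : MeasurableSet Q) (hg : Measurable g)
    (hlam : 0 < lam) (hμ₀ : μ Q ≠ 0) (hμ : μ Q ≠ ⊤) : (rOscSet μ lam g Q).Nonempty := by
  set s : ℕ → Set (Fin d → ℝ) := fun n => Q ∩ {x | (n : ℝ) < |g x|}
  have hs_meas : ∀ n, NullMeasurableSet (s n) μ := fun n =>
    (hQ.inter (measurableSet_lt measurable_const hg.abs)).nullMeasurableSet
  have hs_anti : Antitone s := fun n m hnm x hx =>
    ⟨hx.1, (Nat.cast_le.mpr hnm).trans_lt (show (m : ℝ) < |g x| from hx.2)⟩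
  have hs_fin : ∃ n, μ (s n) ≠ ⊤ := ⟨0, ne_top_of_le_ne_top hμ (measure_mono inter_subset_left)⟩
  have hs_empty : ⋂ n, s n = ∅ := by
    refine eq_empty_of_forall_notMem fun x hx => ?_
    obtain ⟨n, hn⟩ := exists_nat_gt |g x|
    exact (mem_iInter.mp hx n).2.not_gt hn
  have hs_tendsto : Tendsto (μ ∘ s) atTop (nhds 0) := by
    simpa [hs_empty] using tendsto_measure_iInter_atTop hs_meas hs_anti hs_fin
  have hpos : 0 < ENNReal.ofReal lam * μ Q :=
    ENNReal.mul_pos (ENNReal.ofReal_pos.mpr hlam).ne' hμ₀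
  obtain ⟨n, hn⟩ := (hs_tendsto.eventually_lt_const hpos).exists
  exact ⟨n, n.cast_nonneg, hn.le⟩

lemma div_two_lt_measure_inter_abs_le {g : (Fin d → ℝ) → ℝ} {r : ℝ} (hμ : μ Q ≠ ⊤)
    (hlam : ENNReal.ofReal lam * μ Q < μ Q / 2) (hr : r ∈ rOscSet μ lam g Q) :
    μ Q / 2 < μ (Q ∩ {x | |g x| ≤ r}) := by
  by_contra! h
  have hcover : μ Q ≤ μ (Q ∩ {x | |g x| ≤ r}) + μ (Q ∩ {x | r < |g x|}) := by
    refine (measure_mono fun x hx => ?_).trans (measure_union_le _ _)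
    rcases le_or_gt |g x| r with hle | hlt
    · exact Or.inl ⟨hx, hle⟩
    · exact Or.inr ⟨hx, hlt⟩
  have hhalf_ne_top : μ Q / 2 ≠ ⊤ := ENNReal.div_ne_top hμ two_ne_zero
  have := hcover.trans_lt
    (ENNReal.add_lt_add_of_le_of_lt (ne_top_of_le_ne_top hhalf_ne_top h) h (hr.2.trans_lt hlam))
  rw [ENNReal.add_halves] at this
  exact this.false

lemma IsMedian.abs_sub_le_of_mem_rOscSet {f : (Fin d → ℝ) → ℝ} {m c r : ℝ}
    (hm : IsMedian μ f Q m) (hμ : μ Q ≠ ⊤) (hlam : ENNReal.ofReal lam * μ Q < μ Q / 2)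
    (hr : r ∈ rOscSet μ lam (fun x => f x - c) Q) : |m - c| ≤ r := by
  have hbig := div_two_lt_measure_inter_abs_le hμ hlam hr
  refine abs_le.mpr ⟨not_lt.mp fun hlt => ?_, not_lt.mp fun hlt => ?_⟩
  · refine hbig.not_ge ((measure_mono ?_).trans hm.1)
    rintro x ⟨hxQ, hx : |f x - c| ≤ r⟩
    exact ⟨hxQ, show m < f x by linarith [(abs_le.mp hx).1]⟩
  · refine hbig.not_ge ((measure_mono ?_).trans hm.2)
    rintro x ⟨hxQ, hx : |f x - c| ≤ r⟩
    exact ⟨hxQ, show f x < m by linarith [(abs_le.mp hx).2]⟩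

lemma add_abs_sub_mem_rOscSet {f : (Fin d → ℝ) → ℝ} {c c' r : ℝ}
    (hr : r ∈ rOscSet μ lam (fun x => f x - c) Q) :
    r + |c - c'| ∈ rOscSet μ lam (fun x => f x - c') Q := by
  refine ⟨add_nonneg hr.1 (abs_nonneg _), (measure_mono ?_).trans hr.2⟩
  rintro x ⟨hxQ, hx : r + |c - c'| < |f x - c'|⟩
  exact ⟨hxQ, show r < |f x - c| by linarith [abs_sub_le (f x) c c']⟩

variable {f : (Fin d → ℝ) → ℝ}

lemma rOsc_sub_le_rOsc_sub_add (hQ : MeasurableSet Q) (hf : Measurable f) (hlam₀ : 0 < lam)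
    (hμ₀ : μ Q ≠ 0) (hμ : μ Q ≠ ⊤) (c c' : ℝ) :
    rOsc μ lam (fun x => f x - c') Q ≤ rOsc μ lam (fun x => f x - c) Q + |c - c'| := by
  rw [rOsc_eq_sInf, rOsc_eq_sInf, ← sub_le_iff_le_add]
  refine le_csInf (rOscSet_nonempty hQ (hf.sub_const c) hlam₀ hμ₀ hμ) fun r hr => ?_
  exact sub_le_iff_le_add.mpr (csInf_le (rOscSet_bddBelow _) (add_abs_sub_mem_rOscSet hr))

lemma IsMedian.abs_sub_le_rOsc {m : ℝ} (hm : IsMedian μ f Q m) (hQ : MeasurableSet Q)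
    (hf : Measurable f) (hlam₀ : 0 < lam) (hlam : lam < 1 / 2) (hμ₀ : μ Q ≠ 0) (hμ : μ Q ≠ ⊤)
    (c : ℝ) :
    |m - c| ≤ rOsc μ lam (fun x => f x - c) Q :=
  le_csInf (rOscSet_nonempty hQ (hf.sub_const c) hlam₀ hμ₀ hμ) fun _ hr =>
    hm.abs_sub_le_of_mem_rOscSet hμ (ENNReal.ofReal_mul_lt_div_two hlam hμ₀ hμ) hr

lemma IsMedian.rOsc_sub_le_two_mul_mOsc_add {m : ℝ} (hm : IsMedian μ f Q m)
    (hQ : MeasurableSet Q) (hf : Measurable f) (hlam₀ : 0 < lam) (hlam : lam < 1 / 2)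
    (hμ₀ : μ Q ≠ 0) (hμ : μ Q ≠ ⊤) (c' : ℝ) :
    rOsc μ lam (fun x => f x - c') Q ≤ 2 * mOsc μ lam f Q + |m - c'| := by
  suffices h : ∀ c, (rOsc μ lam (fun x => f x - c') Q - |m - c'|) / 2 ≤
      rOsc μ lam (fun x => f x - c) Q by
    linarith [show _ ≤ mOsc μ lam f Q from le_ciInf h]
  intro c
  have hmc : |m - c| ≤ rOsc μ lam (fun x => f x - c) Q :=
    hm.abs_sub_le_rOsc hQ hf hlam₀ hlam hμ₀ hμ c
  have : rOsc μ lam (fun x => f x - c') Q ≤ 2 * rOsc μ lam (fun x => f x - c) Q + |m - c'| :=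
    calc rOsc μ lam (fun x => f x - c') Q
        ≤ rOsc μ lam (fun x => f x - c) Q + |c - c'| :=
          rOsc_sub_le_rOsc_sub_add hQ hf hlam₀ hμ₀ hμ c c'
      _ ≤ rOsc μ lam (fun x => f x - c) Q + (|m - c| + |m - c'|) := by
          gcongr
          rw [abs_sub_comm m c]
          exact abs_sub_le c m c'
      _ ≤ 2 * rOsc μ lam (fun x => f x - c) Q + |m - c'| := by linarith
  linarith

end Oscillation

/-- equivalence of oscillation quantities, with absolute constants. -/
theorem oscillation_quantities_equivalent :
    ∃ c C : ℝ, 0 < c ∧ 0 < C ∧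
      ∀ (d : ℕ) (μ : Measure (Fin d → ℝ)), IsLocallyFiniteMeasure μ →
      ∀ (f : (Fin d → ℝ) → ℝ), Measurable f →
      ∀ (lam : ℝ), 0 < lam → lam < 1 / 2 →
      ∀ (F : DyadicCube d), 0 < μ F.toSet → μ F.toSet < ⊤ → μ F.parent.toSet < ⊤ →
      ∀ (mF mFp : ℝ), IsMedian μ f F.toSet mF → IsMedian μ f F.parent.toSet mFp →
        c * (mOsc μ lam f F.toSet + |mF - mFp|) ≤
            rOsc μ lam (fun x => f x - mFp) F.toSet ∧
          rOsc μ lam (fun x => f x - mFp) F.toSet ≤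
            C * (mOsc μ lam f F.toSet + |mF - mFp|) := by
  refine ⟨1 / 2, 2, by norm_num, by norm_num, ?_⟩
  intro d μ _ f hf lam hlam₀ hlam F hμ₀ hμ _ mF mFp hmF _
  have hQ := F.measurableSet_toSet_s18
  have hmOsc := mOsc_le_rOsc (μ := μ) (lam := lam) (Q := F.toSet) f mFp
  have hmed := hmF.abs_sub_le_rOsc hQ hf hlam₀ hlam hμ₀.ne' hμ.ne mFp
  have hupper := hmF.rOsc_sub_le_two_mul_mOsc_add hQ hf hlam₀ hlam hμ₀.ne' hμ.ne mFp
  have := abs_nonneg (mF - mFp)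
  constructor <;> linarith
end
end
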